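/- arXiv:2405.07271 — 11 statements merged into one kernel-verified Lean document; each statement's English description precedes it below -/
import Mathlib

section
/- If 0 → M' → M → M'' → 0 is a short exact sequence of modules over a commutative ring R with S a multiplicative set, and both M' and M'' are S-finitely presented, then M is S-finitely presented. -/
open Function LinearMap

/-- A module `M` is `S`-finite: there is a f.g. submodule `N₀` and `s ∈ S` with `s • M ⊆ N₀`. -/
def SFiniteMod (R : Type*) [CommRing R] (S : Submonoid R)
    (M : Type*) [AddCommGroup M] [Module R M] : Prop :=
  ∃ N₀ : Submodule R M, N₀.FG ∧ ∃ s ∈ S, ∀ m : M, s • m ∈ N₀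

/-- A module `M` is `S`-finitely presented: there is an exact sequence
`0 → K → F → M → 0` with `F` finitely generated free and `K` `S`-finite. -/
def SFinitePres (R : Type*) [CommRing R] (S : Submonoid R)
    (M : Type*) [AddCommGroup M] [Module R M] : Prop :=
  ∃ (n : ℕ) (f : (Fin n → R) →ₗ[R] M), Function.Surjective f ∧
    ∃ K₀ : Submodule R (Fin n → R), K₀.FG ∧ K₀ ≤ LinearMap.ker f ∧
      ∃ s ∈ S, ∀ x ∈ LinearMap.ker f, s • x ∈ K₀

/-- An ideal `I` is `S`-finite. -/
def SFiniteIdeal (R : Type*) [CommRing R] (S : Submonoid R) (I : Ideal R) : Prop :=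
  ∃ J : Ideal R, J.FG ∧ J ≤ I ∧ ∃ s ∈ S, ∀ x ∈ I, s * x ∈ J

/-- `R` is an `S`-coherent ring: every finitely generated ideal is `S`-finitely presented. -/
def SCoherentRing (R : Type*) [CommRing R] (S : Submonoid R) : Prop :=
  ∀ I : Ideal R, I.FG → SFinitePres R S ↥I

/-- `M` is an `S`-coherent module: finitely generated and every finitely generated
submodule is `S`-finitely presented. -/
def SCoherentMod (R : Type*) [CommRing R] (S : Submonoid R)
    (M : Type*) [AddCommGroup M] [Module R M] : Prop :=
  Module.Finite R M ∧ ∀ N : Submodule R M, N.FG → SFinitePres R S ↥N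

/-!
Choose S-finite presentations `F₁ → M'` and `F₂ → M''`, lift `F₂ → M''` along `M → M''`,
and present `M` by `F₁ × F₂`. The kernel of this presentation is an extension of the kernel
for `M''` by the kernel for `M'`, and S-finiteness is stable under extensions
(the two denominators multiply).
-/

section SFinite

variable {R : Type*} [CommRing R] {S : Submonoid R}

theorem Submodule.FG.exists_fg_map_eq {M N : Type*} [AddCommGroup M] [Module R M]
    [AddCommGroup N] [Module R N] {g : M →ₗ[R] N} (hg : Surjective g) {P : Submodule R N}
    (hP : P.FG) : ∃ Q : Submodule R M, Q.FG ∧ Q.map g = P := by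
  obtain ⟨T, hT, rfl⟩ := Submodule.fg_def.mp hP
  refine ⟨Submodule.span R (surjInv hg '' T), Submodule.fg_def.mpr ⟨_, hT.image _, rfl⟩, ?_⟩
  rw [Submodule.map_span, Set.image_image]
  simp only [surjInv_eq hg, Set.image_id']

theorem sFiniteMod_submodule_iff {M : Type*} [AddCommGroup M] [Module R M] {K : Submodule R M} :
    SFiniteMod R S K ↔ ∃ K₀ : Submodule R M, K₀.FG ∧ K₀ ≤ K ∧ ∃ s ∈ S, ∀ x ∈ K, s • x ∈ K₀ := by
  constructor
  · rintro ⟨N₀, hN₀, s, hs, hsN₀⟩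
    refine ⟨N₀.map K.subtype, hN₀.map _, Submodule.map_subtype_le _ _, s, hs, fun x hx => ?_⟩
    exact ⟨_, hsN₀ ⟨x, hx⟩, rfl⟩
  · rintro ⟨K₀, hK₀, hK₀K, s, hs, hsK₀⟩
    refine ⟨K₀.comap K.subtype, ?_, s, hs, fun x => hsK₀ x x.2⟩
    refine Submodule.fg_of_fg_map_injective K.subtype K.injective_subtype ?_
    rwa [Submodule.map_comap_subtype, inf_eq_right.mpr hK₀K]

theorem sFinitePres_iff {M : Type*} [AddCommGroup M] [Module R M] :
    SFinitePres R S M ↔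
      ∃ (n : ℕ) (p : (Fin n → R) →ₗ[R] M), Surjective p ∧ SFiniteMod R S (ker p) := by
  simp only [SFinitePres, sFiniteMod_submodule_iff]

theorem sFinitePres_of_surjective {F M : Type*} [AddCommGroup F] [Module R F] [Module.Free R F]
    [Module.Finite R F] [AddCommGroup M] [Module R M] {p : F →ₗ[R] M} (hp : Surjective p)
    (hK : SFiniteMod R S (ker p)) : SFinitePres R S M := by
  let e : F ≃ₗ[R] (Fin _ → R) := (Module.Free.chooseBasis R F).equivFun.trans
    (LinearEquiv.funCongrLeft R R (Fintype.equivFin _).symm)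
  obtain ⟨K₀, hK₀, hK₀K, s, hs, hsK₀⟩ := sFiniteMod_submodule_iff.mp hK
  refine sFinitePres_iff.mpr ⟨_, p ∘ₗ e.symm.toLinearMap, hp.comp e.symm.surjective,
    sFiniteMod_submodule_iff.mpr ⟨K₀.map e.toLinearMap, hK₀.map _, ?_, s, hs, fun x hx => ?_⟩⟩
  · rintro _ ⟨k, hk, rfl⟩
    simpa using hK₀K hk
  · exact ⟨s • e.symm x, hsK₀ _ hx, by simp⟩

theorem SFiniteMod.of_exact {A B C : Type*} [AddCommGroup A] [Module R A] [AddCommGroup B]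
    [Module R B] [AddCommGroup C] [Module R C] {f : A →ₗ[R] B} {g : B →ₗ[R] C}
    (hg : Surjective g) (hfg : Exact f g) (hA : SFiniteMod R S A) (hC : SFiniteMod R S C) :
    SFiniteMod R S B := by
  obtain ⟨NA, hNA, t, ht, htNA⟩ := hA
  obtain ⟨NC, hNC, s, hs, hsNC⟩ := hC
  obtain ⟨N, hN, hNC_eq⟩ := hNC.exists_fg_map_eq hg
  refine ⟨NA.map f ⊔ N, (hNA.map f).sup hN, t * s, S.mul_mem ht hs, fun b => ?_⟩
  obtain ⟨y, hy, hgy⟩ : s • g b ∈ N.map g := hNC_eq ▸ hsNC (g b)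
  obtain ⟨a, ha⟩ : s • b - y ∈ range f := (hfg _).mp (by simp [hgy])
  have hdecomp : (t * s) • b = f (t • a) + t • y := by
    rw [map_smul, ha, mul_smul, smul_sub, sub_add_cancel]
  rw [hdecomp]
  exact Submodule.add_mem _ (Submodule.mem_sup_left ⟨_, htNA a, rfl⟩)
    (Submodule.mem_sup_right (N.smul_mem t hy))

section Horseshoe

variable {F₁ F₂ M' M M'' : Type*} [AddCommGroup F₁] [Module R F₁] [AddCommGroup F₂] [Module R F₂]
  [AddCommGroup M'] [Module R M'] [AddCommGroup M] [Module R M] [AddCommGroup M''] [Module R M'']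
  {f : M' →ₗ[R] M} {g : M →ₗ[R] M''} {p : F₁ →ₗ[R] M'} {h : F₂ →ₗ[R] M}

theorem surjective_coprod_of_exact (hfg : Exact f g) (hp : Surjective p)
    (hgh : Surjective (g ∘ₗ h)) : Surjective ((f ∘ₗ p).coprod h) := by
  intro m
  obtain ⟨b, hb⟩ := hgh (g m)
  obtain ⟨m', hm'⟩ : m - h b ∈ range f := (hfg _).mp (by simp_all)
  obtain ⟨a, rfl⟩ := hp m'
  exact ⟨(a, b), by simp [hm']⟩

theorem sFiniteMod_ker_coprod (hf : Injective f) (hfg : Exact f g) (hp : Surjective p)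
    (hK₁ : SFiniteMod R S (ker p)) (hK₂ : SFiniteMod R S (ker (g ∘ₗ h))) :
    SFiniteMod R S (ker ((f ∘ₗ p).coprod h)) := by
  let ι : ker p →ₗ[R] ker ((f ∘ₗ p).coprod h) := (inl R F₁ F₂).restrict fun a ha => by simp_all
  let π : ker ((f ∘ₗ p).coprod h) →ₗ[R] ker (g ∘ₗ h) := (snd R F₁ F₂).restrict fun x hx => by
    have hx' : h x.2 = f (-p x.1) := by
      simp only [mem_ker, coprod_apply, LinearMap.comp_apply] at hx
      rw [map_neg, eq_neg_iff_add_eq_zero, add_comm, hx]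
    simp [hx', hfg.apply_apply_eq_zero]
  have hπ : Surjective π := by
    rintro ⟨b, hb⟩
    obtain ⟨m', hm'⟩ := (hfg (h b)).mp hb
    obtain ⟨a, rfl⟩ := hp m'
    exact ⟨⟨(-a, b), by simp [hm']⟩, rfl⟩
  have hιπ : Exact ι π := by
    intro x
    constructor
    · obtain ⟨⟨a, b⟩, hab⟩ := x
      intro hb
      obtain rfl : b = 0 := congrArg Subtype.val hb
      have ha : p a = 0 := by simpa [map_eq_zero_iff f hf] using hab
      exact ⟨⟨a, ha⟩, rfl⟩
    · rintro ⟨a, rfl⟩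
      rfl
  exact hK₁.of_exact hπ hιπ hK₂

end Horseshoe

end SFinite

/-- If `0 → M' → M → M'' → 0` is exact and `M'`, `M''` are S-finitely presented,
then so is `M`. -/
theorem stmt0 {R : Type*} [CommRing R] (S : Submonoid R)
    {M' M M'' : Type*} [AddCommGroup M'] [Module R M'] [AddCommGroup M] [Module R M]
    [AddCommGroup M''] [Module R M'']
    (f : M' →ₗ[R] M) (g : M →ₗ[R] M'')
    (hf : Function.Injective f) (hg : Function.Surjective g) (hfg : Function.Exact f g)
    (h1 : SFinitePres R S M') (h2 : SFinitePres R S M'') :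
    SFinitePres R S M := by
  obtain ⟨n₁, p₁, hp₁, hK₁⟩ := sFinitePres_iff.mp h1
  obtain ⟨n₂, p₂, hp₂, hK₂⟩ := sFinitePres_iff.mp h2
  obtain ⟨h, rfl⟩ := Module.projective_lifting_property g p₂ hg
  exact sFinitePres_of_surjective (surjective_coprod_of_exact hfg hp₁ hp₂)
    (sFiniteMod_ker_coprod hf hfg hp₁ hK₁ hK₂)
end

section
/- If 0 → M' → M → M'' → 0 is a short exact sequence of R-modules, M' is S-finite, and M is S-finitely presented, then M'' is S-finitely presented. -/
open Function LinearMap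

/-!
Choose a presentation `π : Rⁿ → M` with `S`-finite kernel. The kernel of `g ∘ π` is
`π⁻¹(ker g)`; it contains `ker π`, and its image under `π` is `ker g = f(M')`, which is
`S`-finite because `M'` is. An extension of an `S`-finite submodule by an `S`-finite one is
`S`-finite: lift finitely many generators through `π` and multiply the two scalars.
-/

namespace Submodule

variable {R M P : Type*} [Ring R] [AddCommGroup M] [Module R M] [AddCommGroup P] [Module R P]

def IsSFinite (S : Submonoid R) (N : Submodule R M) : Prop :=
  ∃ N₀ : Submodule R M, N₀.FG ∧ N₀ ≤ N ∧ ∃ s ∈ S, ∀ x ∈ N, s • x ∈ N₀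

theorem exists_fg_le_map_eq {φ : M →ₗ[R] P} {N : Submodule R M} {N₁ : Submodule R P}
    (hN₁ : N₁.FG) (hle : N₁ ≤ N.map φ) : ∃ L : Submodule R M, L.FG ∧ L ≤ N ∧ L.map φ = N₁ := by
  obtain ⟨T, hT, rfl⟩ := fg_def.1 hN₁
  have hTN : T ⊆ φ '' N := fun y hy => hle (subset_span hy)
  obtain ⟨U, hUN, hU, hUT⟩ := Set.exists_subset_image_finite_and.1 ⟨T, hTN, hT, rfl⟩
  exact ⟨span R U, fg_span hU, span_le.2 hUN, by rw [map_span, hUT]⟩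

theorem IsSFinite.of_ker_le {S : Submonoid R} {φ : M →ₗ[R] P} {N : Submodule R M}
    (hker : (ker φ).IsSFinite S) (hle : ker φ ≤ N)
    (hmap : (N.map φ).IsSFinite S) : N.IsSFinite S := by
  obtain ⟨K₀, hK₀, hK₀le, s, hs, hsK⟩ := hker
  obtain ⟨N₁, hN₁, hN₁le, t, ht, htN⟩ := hmap
  obtain ⟨L, hL, hLN, hLN₁⟩ := exists_fg_le_map_eq hN₁ hN₁le
  refine ⟨K₀ ⊔ L, hK₀.sup hL, sup_le (hK₀le.trans hle) hLN, s * t, S.mul_mem hs ht,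
    fun x hx => ?_⟩
  obtain ⟨l, hl, hφl⟩ : t • φ x ∈ L.map φ := hLN₁ ▸ htN _ (mem_map_of_mem hx)
  have hdiff : t • x - l ∈ ker φ := by
    rw [LinearMap.mem_ker, map_sub, map_smul, hφl, sub_self]
  have hsplit : (s * t) • x = s • (t • x - l) + s • l := by
    rw [smul_sub, mul_smul, sub_add_cancel]
  rw [hsplit]
  exact add_mem (mem_sup_left (hsK _ hdiff)) (mem_sup_right (smul_mem _ _ hl))

end Submodule

section

variable {R : Type*} [CommRing R] {S : Submonoid R}
  {M' M M'' : Type*} [AddCommGroup M'] [Module R M'] [AddCommGroup M] [Module R M]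
  [AddCommGroup M''] [Module R M'']

theorem sFinitePres_iff_exists_isSFinite_ker :
    SFinitePres R S M ↔ ∃ (n : ℕ) (π : (Fin n → R) →ₗ[R] M),
      Surjective π ∧ (ker π).IsSFinite S :=
  Iff.rfl

theorem SFiniteMod.isSFinite_range (h : SFiniteMod R S M') (f : M' →ₗ[R] M) :
    (range f).IsSFinite S := by
  obtain ⟨N₀, hN₀, s, hs, hsN⟩ := h
  refine ⟨N₀.map f, hN₀.map f, map_le_range, s, hs, ?_⟩
  rintro _ ⟨m, rfl⟩
  exact ⟨s • m, hsN m, map_smul f s m⟩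

theorem SFinitePres.of_surjective (h : SFinitePres R S M) {g : M →ₗ[R] M''}
    (hg : Surjective g) (hker : (ker g).IsSFinite S) :
    SFinitePres R S M'' := by
  obtain ⟨n, π, hπ, hπker⟩ := sFinitePres_iff_exists_isSFinite_ker.1 h
  refine sFinitePres_iff_exists_isSFinite_ker.2 ⟨n, g ∘ₗ π, hg.comp hπ, ?_⟩
  refine hπker.of_ker_le (ker_le_ker_comp π g) ?_
  rwa [ker_comp, Submodule.map_comap_eq_of_surjective hπ]

end

theorem stmt1_general {R : Type*} [CommRing R] (S : Submonoid R)
    {M' M M'' : Type*} [AddCommGroup M'] [Module R M'] [AddCommGroup M] [Module R M]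
    [AddCommGroup M''] [Module R M'']
    (f : M' →ₗ[R] M) (g : M →ₗ[R] M'')
    (hg : Function.Surjective g) (hfg : Function.Exact f g)
    (h1 : SFiniteMod R S M') (h2 : SFinitePres R S M) :
    SFinitePres R S M'' :=
  h2.of_surjective hg (hfg.linearMap_ker_eq ▸ h1.isSFinite_range f)

/-- If `0 → M' → M → M'' → 0` is exact, `M'` is S-finite and `M` is S-finitely
presented, then `M''` is S-finitely presented. -/
theorem stmt1 {R : Type*} [CommRing R] (S : Submonoid R)
    {M' M M'' : Type*} [AddCommGroup M'] [Module R M'] [AddCommGroup M] [Module R M]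
    [AddCommGroup M''] [Module R M'']
    (f : M' →ₗ[R] M) (g : M →ₗ[R] M'')
    (hf : Function.Injective f) (hg : Function.Surjective g) (hfg : Function.Exact f g)
    (h1 : SFiniteMod R S M') (h2 : SFinitePres R S M) :
    SFinitePres R S M'' :=
  stmt1_general S f g hg hfg h1 h2
end

section
/- If 0 → M' → M → M'' → 0 is a short exact sequence of R-modules, M'' is S-finitely presented, and M is S-finite, then M' is S-finite. -/
open Function LinearMap

/-!
Lift the presentation `π : Rⁿ → M''` through `g` to `φ : Rⁿ → M`. Then `(x, m') ↦ φ x + f m'` is a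
surjection `Rⁿ × M' → M`. Since `f` is injective, its kernel maps injectively onto `ker π` under the
first projection, so the part of the kernel lying over `K₀` is finitely generated and contains
`s • kernel`. Hence `Rⁿ × M'` is an extension of `S`-finite modules, so it is `S`-finite, and so is
its quotient `M'`.
-/

theorem Submodule.FG.exists_fg_map_eq_s2 {R B C : Type*} [CommRing R] [AddCommGroup B] [Module R B]
    [AddCommGroup C] [Module R C] {β : B →ₗ[R] C} (hβ : Surjective β) {N : Submodule R C}
    (hN : N.FG) : ∃ N' : Submodule R B, N'.FG ∧ N'.map β = N := by
  obtain ⟨t, rfl⟩ := hN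
  refine ⟨Submodule.span R (surjInv hβ '' t), Submodule.fg_span (t.finite_toSet.image _), ?_⟩
  rw [Submodule.map_span, Set.image_image]
  simp only [surjInv_eq hβ, Set.image_id']

namespace SFiniteMod

variable {R : Type*} [CommRing R] {S : Submonoid R} {B C : Type*}
  [AddCommGroup B] [Module R B] [AddCommGroup C] [Module R C] {β : B →ₗ[R] C}

theorem of_surjective (hβ : Surjective β) (hB : SFiniteMod R S B) : SFiniteMod R S C := by
  obtain ⟨N, hN, s, hs, hsN⟩ := hB
  refine ⟨N.map β, hN.map β, s, hs, fun c => ?_⟩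
  obtain ⟨b, rfl⟩ := hβ c
  rw [← map_smul]
  exact Submodule.mem_map_of_mem (hsN b)

theorem of_surjective_of_ker (hβ : Surjective β) (hC : SFiniteMod R S C)
    {K : Submodule R B} (hK : K.FG) {t : R} (ht : t ∈ S) (htK : ∀ b ∈ ker β, t • b ∈ K) :
    SFiniteMod R S B := by
  obtain ⟨N, hN, s, hs, hsN⟩ := hC
  obtain ⟨N', hN', rfl⟩ := hN.exists_fg_map_eq_s2 hβ
  refine ⟨K ⊔ N', hK.sup hN', t * s, S.mul_mem ht hs, fun b => ?_⟩
  obtain ⟨n', hn', hβn'⟩ := hsN (β b)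
  have hker : s • b - n' ∈ ker β := by simp [hβn']
  have hsplit : (t * s) • b = t • (s • b - n') + t • n' := by
    rw [← smul_add, sub_add_cancel, mul_smul]
  rw [hsplit]
  exact Submodule.add_mem_sup (htK _ hker) (N'.smul_mem t hn')

end SFiniteMod

section Coprod

variable {R : Type*} [CommRing R] {F M' M M'' : Type*} [AddCommGroup F] [Module R F]
  [AddCommGroup M'] [Module R M'] [AddCommGroup M] [Module R M] [AddCommGroup M''] [Module R M'']
  {f : M' →ₗ[R] M} {g : M →ₗ[R] M''} (φ : F →ₗ[R] M)

theorem coprod_surjective_of_exact (hfg : Exact f g) (hφ : Surjective (g ∘ₗ φ)) :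
    Surjective (φ.coprod f) := by
  intro m
  obtain ⟨x, hx⟩ := hφ (g m)
  obtain ⟨m', hm'⟩ := (hfg (m - φ x)).mp (by simp [← hx])
  exact ⟨(x, m'), by simp [hm']⟩

theorem map_fst_ker_coprod_of_exact (hfg : Exact f g) :
    (ker (φ.coprod f)).map (fst R F M') = ker (g ∘ₗ φ) := by
  ext x
  constructor
  · rintro ⟨⟨x, m'⟩, hp, rfl⟩
    have hφx : φ x = f (-m') := by
      rw [SetLike.mem_coe, mem_ker, coprod_apply] at hp
      rw [map_neg, eq_neg_iff_add_eq_zero, hp]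
    simp [hφx, hfg.apply_apply_eq_zero]
  · intro hx
    obtain ⟨m', hm'⟩ := (hfg (φ x)).mp hx
    exact ⟨(x, -m'), by simp [hm'], rfl⟩

theorem disjoint_ker_coprod_ker_fst (hf : Injective f) :
    Disjoint (ker (φ.coprod f)) (ker (fst R F M')) := by
  rw [Submodule.disjoint_def]
  rintro ⟨x, m'⟩ hp (rfl : x = 0)
  have hm' : f m' = f 0 := by simpa using hp
  simp [hf hm']

theorem fg_ker_coprod_inf_comap_fst (hf : Injective f) (hfg : Exact f g)
    {K : Submodule R F} (hK : K.FG) (hKle : K ≤ ker (g ∘ₗ φ)) :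
    (ker (φ.coprod f) ⊓ K.comap (fst R F M')).FG := by
  refine Submodule.fg_of_fg_map_of_fg_inf_ker (fst R F M') ?_ ?_
  · rwa [← Submodule.map_inf_eq_map_inf_comap, map_fst_ker_coprod_of_exact φ hfg,
      inf_eq_right.mpr hKle]
  · rw [inf_right_comm, (disjoint_ker_coprod_ker_fst φ hf).eq_bot, bot_inf_eq]
    exact Submodule.fg_bot

end Coprod

/-- If `0 → M' → M → M'' → 0` is exact, `M''` is S-finitely presented and `M` is
S-finite, then `M'` is S-finite. -/
theorem stmt2 {R : Type*} [CommRing R] (S : Submonoid R)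
    {M' M M'' : Type*} [AddCommGroup M'] [Module R M'] [AddCommGroup M] [Module R M]
    [AddCommGroup M''] [Module R M'']
    (f : M' →ₗ[R] M) (g : M →ₗ[R] M'')
    (hf : Function.Injective f) (hg : Function.Surjective g) (hfg : Function.Exact f g)
    (h1 : SFinitePres R S M'') (h2 : SFiniteMod R S M) :
    SFiniteMod R S M' := by
  obtain ⟨n, π, hπ, K, hK, hKker, s, hs, hsK⟩ := h1
  obtain ⟨φ, rfl⟩ := Module.projective_lifting_property g π hg
  have hs_ker : ∀ p ∈ ker (φ.coprod f), s • p ∈ ker (φ.coprod f) ⊓ K.comap (fst R _ M') :=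
    fun p hp => ⟨Submodule.smul_mem _ s hp,
      hsK _ (map_fst_ker_coprod_of_exact φ hfg ▸ Submodule.mem_map_of_mem hp)⟩
  have hprod : SFiniteMod R S ((Fin n → R) × M') :=
    .of_surjective_of_ker (coprod_surjective_of_exact φ hfg hπ) h2
      (fg_ker_coprod_inf_comap_fst φ hf hfg hK hKker) hs hs_ker
  exact hprod.of_surjective snd_surjective
end

section
/- If R is an S-coherent ring, then the intersection of two S-finite ideals of R is S-finite. -/
/-!
If `s I ⊆ I₀ ⊆ I` and `t J ⊆ J₀ ⊆ J` with `I₀`, `J₀` finitely generated, then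
`st (I ⊓ J) ⊆ I₀ ⊓ J₀ ⊆ I ⊓ J`, so it suffices to treat finitely generated ideals. For those,
`I₀ ⊓ J₀` is the image of the kernel of a surjection `Rᵐ × Rⁿ → I₀ + J₀`, and by coherence and a
Schanuel-type argument every such kernel is `S`-finite.
-/

open Function LinearMap

def SFiniteSubmodule {R : Type*} [CommSemiring R] (S : Submonoid R)
    {M : Type*} [AddCommMonoid M] [Module R M] (N : Submodule R M) : Prop :=
  ∃ N₀ : Submodule R M, N₀.FG ∧ N₀ ≤ N ∧ ∃ s ∈ S, ∀ x ∈ N, s • x ∈ N₀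

theorem sFiniteIdeal_iff_sFiniteSubmodule {R : Type*} [CommRing R] (S : Submonoid R)
    (I : Ideal R) : SFiniteIdeal R S I ↔ SFiniteSubmodule S I :=
  Iff.rfl

namespace SFiniteSubmodule

variable {R : Type*} [CommSemiring R] {S : Submonoid R}
  {M : Type*} [AddCommMonoid M] [Module R M]

theorem map {N : Submodule R M} (hN : SFiniteSubmodule S N)
    {P : Type*} [AddCommMonoid P] [Module R P] (f : M →ₗ[R] P) :
    SFiniteSubmodule S (N.map f) := by
  obtain ⟨N₀, hN₀, hle, s, hs, hsN⟩ := hN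
  refine ⟨N₀.map f, hN₀.map f, Submodule.map_mono hle, s, hs, ?_⟩
  rintro _ ⟨x, hx, rfl⟩
  exact ⟨s • x, hsN x hx, map_smul f s x⟩

theorem of_smul_mem {N N' : Submodule R M} (hN' : SFiniteSubmodule S N') (hle : N' ≤ N)
    {s : R} (hs : s ∈ S) (hsN : ∀ x ∈ N, s • x ∈ N') : SFiniteSubmodule S N := by
  obtain ⟨N₀, hN₀, hle₀, t, ht, htN'⟩ := hN'
  refine ⟨N₀, hN₀, hle₀.trans hle, t * s, S.mul_mem ht hs, fun x hx => ?_⟩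
  rw [mul_smul]
  exact htN' _ (hsN x hx)

end SFiniteSubmodule

section Kernel

variable {R : Type*} [CommRing R] {S : Submonoid R} {M : Type*} [AddCommGroup M] [Module R M]

/-- A Schanuel-type comparison: with `α`, `β` lifting `φ` and `f` through each other,
`x = (x - β (α x)) + β (α x)` splits `ker φ` into the finitely generated range of
`id - β ∘ α` and the image of `ker f`. -/
theorem sFiniteSubmodule_ker_of_surjective
    {F : Type*} [AddCommGroup F] [Module R F] [Module.Projective R F] [Module.Finite R F]
    {F' : Type*} [AddCommGroup F'] [Module R F'] [Module.Projective R F']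
    {f : F' →ₗ[R] M} (hf : Function.Surjective f) (hker : SFiniteSubmodule S (ker f))
    {φ : F →ₗ[R] M} (hφ : Function.Surjective φ) : SFiniteSubmodule S (ker φ) := by
  obtain ⟨α, hα⟩ := Module.projective_lifting_property f φ hf
  obtain ⟨β, hβ⟩ := Module.projective_lifting_property φ f hφ
  obtain ⟨K₀, hK₀, hK₀le, s, hs, hsK₀⟩ := hker
  have hφβ (y : F') : φ (β y) = f y := LinearMap.congr_fun hβ y
  have hfα (x : F) : f (α x) = φ x := LinearMap.congr_fun hα x
  let g : F →ₗ[R] F := LinearMap.id - β ∘ₗ α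
  refine ⟨range g ⊔ K₀.map β, (Submodule.fg_range g).sup (hK₀.map β), sup_le ?_ ?_, s, hs, ?_⟩
  · rintro _ ⟨x, rfl⟩
    simp [g, hφβ, hfα]
  · rintro _ ⟨y, hy, rfl⟩
    rw [mem_ker, hφβ]
    exact hK₀le hy
  · intro x hx
    have hαx : α x ∈ ker f := by rw [mem_ker, hfα, hx]
    have hsplit : s • x = g (s • x) + β (s • α x) := by
      simp only [g, LinearMap.sub_apply, LinearMap.id_apply, LinearMap.comp_apply, map_smul,
        smul_sub]
      exact (sub_add_cancel (s • x) _).symm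
    rw [hsplit]
    exact Submodule.add_mem_sup ⟨s • x, rfl⟩ ⟨s • α x, hsK₀ _ hαx, rfl⟩

theorem SFinitePres.sFiniteSubmodule_ker (hM : SFinitePres R S M)
    {F : Type*} [AddCommGroup F] [Module R F] [Module.Projective R F] [Module.Finite R F]
    {φ : F →ₗ[R] M} (hφ : Function.Surjective φ) : SFiniteSubmodule S (ker φ) := by
  obtain ⟨n, f, hf, hker⟩ := hM
  exact sFiniteSubmodule_ker_of_surjective hf hker hφ

end Kernel

theorem map_fst_ker_coprod_neg {R : Type*} [CommRing R]
    {M P Q : Type*} [AddCommGroup M] [Module R M] [AddCommGroup P] [Module R P]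
    [AddCommGroup Q] [Module R Q] (u : P →ₗ[R] M) (v : Q →ₗ[R] M) :
    (ker (u.coprod (-v))).map (u ∘ₗ LinearMap.fst R P Q) = range u ⊓ range v := by
  ext z
  simp only [Submodule.mem_map, mem_ker, coprod_apply, LinearMap.neg_apply, LinearMap.comp_apply,
    fst_apply, Submodule.mem_inf, mem_range, Prod.exists, ← sub_eq_add_neg, sub_eq_zero]
  constructor
  · rintro ⟨x, y, hxy, rfl⟩
    exact ⟨⟨x, rfl⟩, ⟨y, hxy.symm⟩⟩
  · rintro ⟨⟨x, rfl⟩, ⟨y, hy⟩⟩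
    exact ⟨x, y, hy.symm, rfl⟩

/-- With `u`, `v` parametrising `I`, `J`, the ideal `I ⊓ J` is the image of the kernel of
`(x, y) ↦ u x - v y`, a map onto the finitely generated ideal `I ⊔ J`. -/
theorem SCoherentRing.sFiniteSubmodule_inf_of_fg {R : Type*} [CommRing R] {S : Submonoid R}
    (h : SCoherentRing R S) {I J : Ideal R} (hI : I.FG) (hJ : J.FG) :
    SFiniteSubmodule S (I ⊓ J) := by
  obtain ⟨m, u, rfl⟩ := (Submodule.fg_iff_exists_fin_linearMap R R).mp hI
  obtain ⟨n, v, rfl⟩ := (Submodule.fg_iff_exists_fin_linearMap R R).mp hJ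
  let φ := u.coprod (-v)
  have hker : SFiniteSubmodule S (ker φ) := by
    rw [← ker_rangeRestrict]
    exact (h _ (Submodule.fg_range φ)).sFiniteSubmodule_ker φ.surjective_rangeRestrict
  rw [← map_fst_ker_coprod_neg]
  exact hker.map _

/-- In an S-coherent ring, the intersection of two S-finite ideals is S-finite. -/
theorem stmt4 {R : Type*} [CommRing R] (S : Submonoid R)
    (h : SCoherentRing R S) (I J : Ideal R)
    (hI : SFiniteIdeal R S I) (hJ : SFiniteIdeal R S J) :
    SFiniteIdeal R S (I ⊓ J) := by
  obtain ⟨I₀, hI₀, hI₀le, s, hs, hsI⟩ := hI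
  obtain ⟨J₀, hJ₀, hJ₀le, t, ht, htJ⟩ := hJ
  rw [sFiniteIdeal_iff_sFiniteSubmodule]
  refine (h.sFiniteSubmodule_inf_of_fg hI₀ hJ₀).of_smul_mem (inf_le_inf hI₀le hJ₀le)
    (S.mul_mem hs ht) fun x hx => ⟨?_, ?_⟩
  · rw [smul_eq_mul, mul_right_comm]
    exact I₀.mul_mem_right t (hsI x hx.1)
  · rw [smul_eq_mul, mul_assoc]
    exact J₀.mul_mem_left s (htJ x hx.2)
end

section
/- Let 0 → K → F → M → 0 be an exact sequence of R-modules with F finitely generated free and M c-S-finitely presented. Then K is S-finite. -/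
open Function LinearMap

/-- A module `M` is c-S-finitely presented: there is a finitely presented submodule
`N ⊆ M` and `s ∈ S` with `s • M ⊆ N`. -/
def CSFinitePresMod (R : Type*) [CommRing R] (S : Submonoid R)
    (M : Type*) [AddCommGroup M] [Module R M] : Prop :=
  ∃ N : Submodule R M, Module.FinitePresentation R ↥N ∧ ∃ s ∈ S, ∀ m : M, s • m ∈ N

/-- An ideal `I` is c-S-finitely presented. -/
def CSFiniteIdeal (R : Type*) [CommRing R] (S : Submonoid R) (I : Ideal R) : Prop :=
  ∃ J : Ideal R, J ≤ I ∧ Module.FinitePresentation R ↥J ∧ ∃ s ∈ S, ∀ x ∈ I, s * x ∈ J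

/-- `R` is c-S-coherent: every finitely generated ideal is c-S-finitely presented. -/
def CSCoherentRing (R : Type*) [CommRing R] (S : Submonoid R) : Prop :=
  ∀ I : Ideal R, I.FG → CSFiniteIdeal R S I

/-!
Choose a finitely presented `N ⊆ M` and `s ∈ S` with `s • M ⊆ N`, and a finitely generated
`L ⊆ F` mapping onto `N` which contains `s • F`. Restricted to `L`, `g` is a surjection from a
finitely generated module onto a finitely presented one, so its kernel `L ⊓ ker g` is finitely
generated; and it contains `s • ker g` because `s • F ⊆ L`.
-/

namespace Submodule

variable {R F M : Type*} [CommRing R] [AddCommGroup F] [Module R F] [AddCommGroup M] [Module R M]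

theorem exists_fg_map_eq_of_le_range (g : F →ₗ[R] M) {N : Submodule R M} (hN : N.FG)
    (hle : N ≤ range g) : ∃ L : Submodule R F, L.FG ∧ L.map g = N := by
  classical
  obtain ⟨t, rfl⟩ := hN
  have ht : (t : Set M) ⊆ g '' Set.univ := by
    rw [Set.image_univ, ← coe_range]
    exact subset_span.trans hle
  obtain ⟨t', -, ht'⟩ := Finset.subset_set_image_iff.mp ht
  exact ⟨span R t', ⟨t', rfl⟩, by rw [map_span, ← ht', Finset.coe_image]⟩

theorem fg_inf_ker_of_map_eq (g : F →ₗ[R] M) {L : Submodule R F} {N : Submodule R M}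
    [Module.FinitePresentation R N] (hL : L.FG) (hLN : L.map g = N) : (L ⊓ ker g).FG := by
  subst hLN
  have : Module.Finite R L := Module.Finite.iff_fg.mpr hL
  have hker := Module.FinitePresentation.fg_ker _ (g.submoduleMap_surjective L)
  rw [ker_submoduleMap] at hker
  simpa only [map_comap_subtype] using hker.map L.subtype

end Submodule

open Submodule

theorem CSFinitePresMod.exists_fg_le_ker_smul_mem {R F M : Type*} [CommRing R] {S : Submonoid R}
    [AddCommGroup F] [Module R F] [Module.Finite R F] [AddCommGroup M] [Module R M]
    (hM : CSFinitePresMod R S M) (g : F →ₗ[R] M) (hg : Surjective g) :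
    ∃ K₀ : Submodule R F, K₀.FG ∧ K₀ ≤ ker g ∧ ∃ s ∈ S, ∀ x ∈ ker g, s • x ∈ K₀ := by
  obtain ⟨N, hN, s, hs, hsN⟩ := hM
  have hNfg : N.FG := Module.Finite.iff_fg.mp inferInstance
  obtain ⟨L, hL, hLN⟩ := exists_fg_map_eq_of_le_range g hNfg (range_eq_top.mpr hg ▸ le_top)
  set L' := L ⊔ range (s • LinearMap.id : F →ₗ[R] F)
  have hL'N : L'.map g = N := by
    rw [Submodule.map_sup, hLN, sup_eq_left]
    rintro _ ⟨_, ⟨y, rfl⟩, rfl⟩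
    simpa using hsN (g y)
  refine ⟨L' ⊓ ker g, fg_inf_ker_of_map_eq g (hL.sup (fg_range _)) hL'N, inf_le_right, s, hs,
    fun x hx => ⟨mem_sup_right ⟨x, rfl⟩, (ker g).smul_mem s hx⟩⟩

theorem SFiniteMod.of_injective {R K F : Type*} [CommRing R] {S : Submonoid R}
    [AddCommGroup K] [Module R K] [AddCommGroup F] [Module R F]
    (f : K →ₗ[R] F) (hf : Injective f) {K₀ : Submodule R F} (hK₀ : K₀.FG) (hle : K₀ ≤ range f)
    {s : R} (hs : s ∈ S) (hsK₀ : ∀ k, s • f k ∈ K₀) : SFiniteMod R S K :=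
  ⟨K₀.comap f, fg_of_fg_map_injective f hf (by rwa [map_comap_eq_self hle]), s, hs,
    fun k => by simpa using hsK₀ k⟩

/-- If `0 → K → F → M → 0` is exact with `F` finitely generated free and `M`
c-S-finitely presented, then `K` is S-finite. -/
theorem stmt10 {R : Type*} [CommRing R] (S : Submonoid R)
    {K M : Type*} [AddCommGroup K] [Module R K] [AddCommGroup M] [Module R M]
    (n : ℕ) (f : K →ₗ[R] (Fin n → R)) (g : (Fin n → R) →ₗ[R] M)
    (hf : Function.Injective f) (hg : Function.Surjective g) (hfg : Function.Exact f g)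
    (hM : CSFinitePresMod R S M) :
    SFiniteMod R S K := by
  obtain ⟨K₀, hK₀, hle, s, hs, hsK₀⟩ := hM.exists_fg_le_ker_smul_mem g hg
  have hrange : range f = ker g := hfg.linearMap_ker_eq.symm
  exact SFiniteMod.of_injective f hf hK₀ (hrange ▸ hle) hs
    fun k => hsK₀ _ (hfg.apply_apply_eq_zero k)
end

section
/- Every c-S-coherent commutative ring is S-coherent. -/
open Function LinearMap

/-! Present `I` as a quotient `f : Rⁿ → I` and let `J ⊆ I` be finitely presented with `s • I ⊆ J`.
The submodule `G ⊆ Rⁿ` spanned by lifts of generators of `J` and by `s • Rⁿ` is finitely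
generated and maps onto `J`, so `G ⊓ ker f` is finitely generated because `J` is finitely
presented; it contains `s • ker f`. -/

theorem Submodule.FG.exists_fg_map_eq_s11 {R P M : Type*} [CommRing R] [AddCommGroup P] [Module R P]
    [AddCommGroup M] [Module R M] {f : P →ₗ[R] M} (hf : Surjective f) {N : Submodule R M}
    (hN : N.FG) : ∃ G : Submodule R P, G.FG ∧ G.map f = N := by
  classical
  obtain ⟨t, rfl⟩ := hN
  refine ⟨_, ⟨t.image (surjInv hf), rfl⟩, ?_⟩
  rw [Submodule.map_span, Finset.coe_image, Set.image_image]
  simp only [surjInv_eq hf, Set.image_id']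

theorem LinearMap.exists_fg_le_ker_of_smul_mem_finitePresentation {R P M : Type*} [CommRing R]
    [AddCommGroup P] [Module R P] [AddCommGroup M] [Module R M] [Module.Finite R P]
    {f : P →ₗ[R] M} (hf : Surjective f) (N : Submodule R M) [Module.FinitePresentation R N]
    {s : R} (hs : ∀ m, s • m ∈ N) :
    ∃ K : Submodule R P, K.FG ∧ K ≤ LinearMap.ker f ∧ ∀ x ∈ LinearMap.ker f, s • x ∈ K := by
  obtain ⟨G₀, hG₀, hG₀N⟩ :=
    (Module.Finite.iff_fg.mp inferInstance : N.FG).exists_fg_map_eq_s11 hf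
  let G := G₀ ⊔ LinearMap.range (s • LinearMap.id : P →ₗ[R] P)
  have hsG : ∀ x, s • x ∈ G := fun x => Submodule.mem_sup_right ⟨x, rfl⟩
  have hGN : G ≤ N.comap f := by
    refine sup_le (Submodule.map_le_iff_le_comap.mp hG₀N.le) ?_
    rintro _ ⟨x, rfl⟩
    simpa using hs (f x)
  have hG : G.FG := hG₀.sup (Module.Finite.iff_fg.mp inferInstance)
  have : Module.Finite R G := Module.Finite.iff_fg.mpr hG
  let g : G →ₗ[R] N := f.restrict fun x hx => hGN hx
  have hg : Surjective g := by
    rintro ⟨y, hy⟩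
    obtain ⟨x, hx, rfl⟩ := hG₀N.ge hy
    exact ⟨⟨x, Submodule.mem_sup_left hx⟩, rfl⟩
  have hK : (LinearMap.ker g).map G.subtype = G ⊓ LinearMap.ker f := by
    rw [LinearMap.ker_restrict, Submodule.map_comap_subtype]
  refine ⟨G ⊓ LinearMap.ker f, hK ▸ (Module.FinitePresentation.fg_ker g hg).map _,
    inf_le_right, fun x hx => ⟨hsG x, Submodule.smul_mem _ s hx⟩⟩

theorem CSFinitePresMod.sFinitePres {R M : Type*} [CommRing R] [AddCommGroup M] [Module R M]
    [Module.Finite R M] {S : Submonoid R} (h : CSFinitePresMod R S M) : SFinitePres R S M := by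
  obtain ⟨N, hN, s, hsS, hs⟩ := h
  obtain ⟨n, f, hf⟩ := Module.Finite.exists_fin' R M
  obtain ⟨K, hK, hKf, hsK⟩ := LinearMap.exists_fg_le_ker_of_smul_mem_finitePresentation hf N hs
  exact ⟨n, f, hf, K, hK, hKf, s, hsS, hsK⟩

theorem CSFiniteIdeal.csFinitePresMod {R : Type*} [CommRing R] {S : Submonoid R} {I : Ideal R}
    (h : CSFiniteIdeal R S I) : CSFinitePresMod R S I := by
  obtain ⟨J, hJI, hJ, s, hsS, hs⟩ := h
  exact ⟨Submodule.comap I.subtype J, .of_equiv (Submodule.comapSubtypeEquivOfLe hJI).symm, s, hsS,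
    fun x => hs x x.2⟩

/-- Every c-S-coherent commutative ring is S-coherent. -/
theorem stmt11 {R : Type*} [CommRing R] (S : Submonoid R)
    (h : CSCoherentRing R S) : SCoherentRing R S := fun I hI =>
  have : Module.Finite R I := Module.Finite.iff_fg.mpr hI
  (h I hI).csFinitePresMod.sFinitePres
end

section
/- If D is an integral domain that is not coherent and S = D \ {0}, then D is a c-S-coherent ring; i.e., every nonzero finitely generated ideal I of D contains a finitely presented sub-ideal J with sI ⊆ J for some nonzero s ∈ D. -/
/-! A nonzero element `s` of a nonzero ideal `I` of a domain generates a free, hence finitely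
presented, sub-ideal `sD`, and `sI ⊆ sD`. -/

theorem Submodule.finitePresentation_span_singleton {R M : Type*} [CommRing R] [IsDomain R]
    [AddCommGroup M] [Module R M] [Module.IsTorsionFree R M] {x : M} (hx : x ≠ 0) :
    Module.FinitePresentation R (R ∙ x) :=
  .of_equiv (LinearEquiv.toSpanNonzeroSingleton R M x hx)

theorem Ideal.exists_finitePresentation_le_of_ne_bot {D : Type*} [CommRing D] [IsDomain D]
    {I : Ideal D} (hI : I ≠ ⊥) :
    ∃ J : Ideal D, J ≤ I ∧ Module.FinitePresentation D J ∧
      ∃ s : D, s ≠ 0 ∧ ∀ x ∈ I, s * x ∈ J := by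
  obtain ⟨s, hsI, hs⟩ := Submodule.exists_mem_ne_zero_of_ne_bot hI
  refine ⟨Ideal.span {s}, (Ideal.span_singleton_le_iff_mem I).mpr hsI,
    Submodule.finitePresentation_span_singleton hs, s, hs, fun x _ => ?_⟩
  exact Ideal.mul_mem_right x _ (Ideal.mem_span_singleton_self s)

theorem stmt13_general {D : Type*} [CommRing D] [IsDomain D] :
    ∀ I : Ideal D, I.FG → I ≠ ⊥ →
      ∃ J : Ideal D, J ≤ I ∧ Module.FinitePresentation D ↥J ∧
        ∃ s : D, s ≠ 0 ∧ ∀ x ∈ I, s * x ∈ J :=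
  fun _ _ hI => Ideal.exists_finitePresentation_le_of_ne_bot hI

/-- If `D` is an integral domain that is not coherent and `S = D \ {0}`, then `D` is
c-S-coherent: every nonzero finitely generated ideal `I` contains a finitely presented
sub-ideal `J` with `s • I ⊆ J` for some nonzero `s`. -/
theorem stmt13 {D : Type*} [CommRing D] [IsDomain D]
    (hnc : ¬ ∀ I : Ideal D, I.FG → Module.FinitePresentation D ↥I) :
    ∀ I : Ideal D, I.FG → I ≠ ⊥ →
      ∃ J : Ideal D, J ≤ I ∧ Module.FinitePresentation D ↥J ∧
        ∃ s : D, s ≠ 0 ∧ ∀ x ∈ I, s * x ∈ J :=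
  stmt13_general
end

section
/- Let R = ℤ(+)(ℤ/2ℤ)^(ℕ) be the trivial (Nagata idealization) extension and S = {(2,0)ⁿ : n ≥ 0}. Then R is an S-Noetherian ring: for every ideal I of R, the ideal (2,0)·I is finitely generated (in fact principal). -/
/-!
Since `2 • m = 0` for every `m` in `(ℤ/2ℤ)^(ℕ)`, multiplying by `(2,0)` kills the second
coordinate: `(2,0)·x = (2·x₁, 0)`. The first coordinates of an ideal `I` form an ideal of the PID
`ℤ`, generated by `a₁` for some `a ∈ I`; if `x₁ = k·a₁` then `(2,0)·x = (k,0)·(2,0)·a`.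
-/

open Function LinearMap

-- `TrivSqZeroExt` needs a right action as well; over the commutative ring `ℤ` it is the left one.
noncomputable instance : Module ℤᵐᵒᵖ (ℕ →₀ ZMod 2) :=
  Module.compHom _ ((RingEquiv.toOpposite ℤ).symm : ℤᵐᵒᵖ →+* ℤ)

instance : IsCentralScalar ℤ (ℕ →₀ ZMod 2) := ⟨fun _ _ => rfl⟩

namespace TrivSqZeroExt

variable {R M : Type*} [CommSemiring R] [AddCommMonoid M] [Module R M] [Module Rᵐᵒᵖ M]

theorem inl_mul_eq_inl_mul_fst {r : R} (hr : Module.IsTorsionBy R M r)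
    (x : TrivSqZeroExt R M) : inl r * x = inl (r * x.fst) := by
  rw [inl_mul_eq_smul]
  exact ext rfl (@hr x.snd)

theorem exists_mem_forall_inl_mul_mem_span_singleton [IsCentralScalar R M]
    [IsPrincipalIdealRing R] {r : R} (hr : Module.IsTorsionBy R M r)
    (I : Ideal (TrivSqZeroExt R M)) : ∃ a ∈ I, ∀ x ∈ I, inl r * x ∈ Ideal.span {a} := by
  obtain ⟨g, hg⟩ := IsPrincipalIdealRing.principal (I.map (fstHom R R M))
  have hg_mem : g ∈ I.map (fstHom R R M) := hg ▸ Submodule.mem_span_singleton_self g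
  obtain ⟨a, haI, hag⟩ := (Ideal.mem_map_iff_of_surjective _ fst_surjective).1 hg_mem
  refine ⟨a, haI, fun x hx => ?_⟩
  obtain ⟨k, hk⟩ := Submodule.mem_span_singleton.1 (hg ▸ Ideal.mem_map_of_mem (fstHom R R M) hx)
  have hx_fst : x.fst = k * a.fst := by
    rw [← fstHom_apply R, ← hk, ← hag, smul_eq_mul, fstHom_apply]
  have : inl r * x = inl k * (inl r * a) := by
    rw [inl_mul_eq_inl_mul_fst hr, inl_mul_eq_inl_mul_fst hr, ← inl_mul, hx_fst, mul_left_comm]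
  rw [this]
  exact Ideal.mul_mem_left _ _ (Ideal.mul_mem_left _ _ (Ideal.mem_span_singleton_self a))

end TrivSqZeroExt

theorem sFiniteIdeal_of_mul_mem_span_singleton {R : Type*} [CommRing R] {S : Submonoid R}
    {I : Ideal R} {s a : R} (hs : s ∈ S) (ha : a ∈ I) (h : ∀ x ∈ I, s * x ∈ Ideal.span {a}) :
    SFiniteIdeal R S I :=
  ⟨Ideal.span {a}, ⟨{a}, by simp⟩, Ideal.span_le.2 (Set.singleton_subset_iff.2 ha), s, hs, h⟩

theorem isTorsionBy_two_finsupp_zmod_two (ι : Type*) : Module.IsTorsionBy ℤ (ι →₀ ZMod 2) 2 :=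
  fun b => by ext i; simp [two_smul, CharTwo.add_self_eq_zero]

/-- Let `R = ℤ(+)(ℤ/2ℤ)^(ℕ)` be the trivial extension and `S = {(2,0)ⁿ}`. Then for
every ideal `I` the ideal `(2,0)·I` is contained in a principal sub-ideal of `I`
(in fact `(2,0)·I` is principal), and `R` is S-Noetherian. -/
theorem stmt14 :
    (∀ I : Ideal (TrivSqZeroExt ℤ (ℕ →₀ ZMod 2)),
      ∃ a ∈ I, ∀ x ∈ I, (2 : TrivSqZeroExt ℤ (ℕ →₀ ZMod 2)) * x ∈ Ideal.span {a}) ∧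
    (∀ I : Ideal (TrivSqZeroExt ℤ (ℕ →₀ ZMod 2)),
      SFiniteIdeal (TrivSqZeroExt ℤ (ℕ →₀ ZMod 2))
        (Submonoid.powers (2 : TrivSqZeroExt ℤ (ℕ →₀ ZMod 2))) I) := by
  have principal_two_mul (I : Ideal (TrivSqZeroExt ℤ (ℕ →₀ ZMod 2))) :
      ∃ a ∈ I, ∀ x ∈ I, (2 : TrivSqZeroExt ℤ (ℕ →₀ ZMod 2)) * x ∈ Ideal.span {a} := by
    exact TrivSqZeroExt.exists_mem_forall_inl_mul_mem_span_singleton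
      (isTorsionBy_two_finsupp_zmod_two ℕ) I
  refine ⟨principal_two_mul, fun I => ?_⟩
  obtain ⟨a, ha, h⟩ := principal_two_mul I
  exact sFiniteIdeal_of_mul_mem_span_singleton (Submonoid.mem_powers 2) ha h
end

section
/- In the trivial extension R = ℤ(+)(ℤ/2ℤ)^(ℕ), the annihilator of the element (2,0) equals 0(+)(ℤ/2ℤ)^(ℕ), and this ideal is not finitely generated; hence the principal ideal ⟨(2,0)⟩ is not a finitely presented R-module. -/
namespace TrivSqZeroExt

theorem mul_inl_eq_zero_iff {R M : Type*} [MonoidWithZero R] [AddMonoid M]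
    [DistribMulAction R M] [DistribMulAction Rᵐᵒᵖ M] (x : TrivSqZeroExt R M) (r : R) :
    x * inl r = 0 ↔ x.fst * r = 0 ∧ MulOpposite.op r • x.snd = 0 := by
  rw [mul_inl_eq_op_smul, TrivSqZeroExt.ext_iff]
  rfl

section kerIdeal

variable {R M : Type*} [CommSemiring R] [AddCommMonoid M] [Module R M] [Module Rᵐᵒᵖ M]
  [IsCentralScalar R M]

theorem mem_kerIdeal_iff_fst (x : TrivSqZeroExt R M) : x ∈ kerIdeal R M ↔ x.fst = 0 := Iff.rfl

theorem snd_mem_span_image_snd {S : Set (TrivSqZeroExt R M)} (hS : S ⊆ kerIdeal R M)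
    {x : TrivSqZeroExt R M} (hx : x ∈ Submodule.span (TrivSqZeroExt R M) S) :
    x.snd ∈ Submodule.span R (snd '' S) := by
  induction hx using Submodule.span_induction with
  | mem s hs => exact Submodule.subset_span (Set.mem_image_of_mem _ hs)
  | zero => exact zero_mem _
  | add x y _ _ hx hy => exact add_mem hx hy
  | smul a x hxS hx =>
    have hx0 : x.fst = 0 := Submodule.span_le.2 hS hxS
    rw [smul_eq_mul, snd_mul, hx0, MulOpposite.op_zero, zero_smul, add_zero]
    exact Submodule.smul_mem _ _ hx

theorem finite_of_fg_kerIdeal (h : (kerIdeal R M).FG) : Module.Finite R M := by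
  obtain ⟨S, hSfin, hS⟩ := Submodule.fg_def.1 h
  refine ⟨Submodule.fg_def.2 ⟨snd '' S, hSfin.image _, eq_top_iff.2 fun m _ => ?_⟩⟩
  have hm : inr m ∈ Submodule.span (TrivSqZeroExt R M) S := hS ▸ (mem_kerIdeal_iff_fst _).2 rfl
  exact snd_mem_span_image_snd (hS ▸ Submodule.subset_span) hm

end kerIdeal

end TrivSqZeroExt

theorem Finsupp.not_moduleFinite_int {ι S : Type*} [Ring S] [Finite S] [Nontrivial S] [Infinite ι] :
    ¬ Module.Finite ℤ (ι →₀ S) := fun _ =>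
  have : Module.Finite S (ι →₀ S) := Module.Finite.of_restrictScalars_finite ℤ S _
  have := Module.finite_of_finite (M := ι →₀ S) S
  not_finite (ι →₀ S)

theorem Module.FinitePresentation.fg_ker_toSpanSingleton {A : Type*} [CommRing A] {a : A}
    (h : Module.FinitePresentation A (Ideal.span {a})) :
    (LinearMap.ker (LinearMap.toSpanSingleton A A a)).FG := by
  rw [show Ideal.span {a} = _ from LinearMap.span_singleton_eq_range A A a] at h
  simpa using Module.FinitePresentation.fg_ker _
    (LinearMap.toSpanSingleton A A a).surjective_rangeRestrict

local notation "𝓡" => TrivSqZeroExt ℤ (ℕ →₀ ZMod 2)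

/-- In the trivial extension `R = ℤ(+)(ℤ/2ℤ)^(ℕ)`, the annihilator of `(2,0)` is
`0(+)(ℤ/2ℤ)^(ℕ)` (the elements with zero first component), this ideal is not
finitely generated, and the principal ideal `⟨(2,0)⟩` is not a finitely presented
`R`-module. -/
theorem stmt16 :
    (∀ x : TrivSqZeroExt ℤ (ℕ →₀ ZMod 2),
      x * (2 : TrivSqZeroExt ℤ (ℕ →₀ ZMod 2)) = 0 ↔ x.fst = 0) ∧
    ¬ (LinearMap.ker (LinearMap.toSpanSingleton (TrivSqZeroExt ℤ (ℕ →₀ ZMod 2))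
        (TrivSqZeroExt ℤ (ℕ →₀ ZMod 2)) (2 : TrivSqZeroExt ℤ (ℕ →₀ ZMod 2)))).FG ∧
    ¬ Module.FinitePresentation (TrivSqZeroExt ℤ (ℕ →₀ ZMod 2))
        ↥(Ideal.span {(2 : TrivSqZeroExt ℤ (ℕ →₀ ZMod 2))}) := by
  have hann (x : 𝓡) : x * 2 = 0 ↔ x.fst = 0 := by
    rw [show (2 : 𝓡) = .inl 2 from (TrivSqZeroExt.inl_natCast 2).symm,
      TrivSqZeroExt.mul_inl_eq_zero_iff]
    simp only [mul_eq_zero, two_ne_zero, or_false, and_iff_left_iff_imp]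
    exact fun _ => (natCast_zsmul x.snd 2).trans (ZModModule.char_nsmul_eq_zero 2 x.snd)
  have hker : LinearMap.ker (LinearMap.toSpanSingleton 𝓡 𝓡 2) =
      TrivSqZeroExt.kerIdeal ℤ (ℕ →₀ ZMod 2) := by
    ext x
    rw [LinearMap.mem_ker, LinearMap.toSpanSingleton_apply, smul_eq_mul, hann,
      TrivSqZeroExt.mem_kerIdeal_iff_fst]
  have hnfg : ¬ (TrivSqZeroExt.kerIdeal ℤ (ℕ →₀ ZMod 2)).FG := fun h =>
    Finsupp.not_moduleFinite_int (TrivSqZeroExt.finite_of_fg_kerIdeal h)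
  exact ⟨hann, hker ▸ hnfg, fun hfp => hker ▸ hnfg <| hfp.fg_ker_toSpanSingleton⟩
end

section
/- If M is a finitely generated R-module that is c-S-finitely presented, then M is u-S-finitely presented; in particular there exist s ∈ S, a finitely presented module F, and a map f : F → M with s • ker f = 0 and s • coker f = 0. -/
open Function LinearMap

theorem Submodule.smul_quotient_eq_zero {R M : Type*} [CommRing R] [AddCommGroup M] [Module R M]
    {N : Submodule R M} {s : R} (hs : ∀ m : M, s • m ∈ N) (y : M ⧸ N) : s • y = 0 := by
  induction y using Submodule.Quotient.induction_on with
  | H m => rw [← Submodule.Quotient.mk_smul, Submodule.Quotient.mk_eq_zero]; exact hs m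

theorem stmt18_general {R : Type*} [CommRing R] (S : Submonoid R)
    {M : Type*} [AddCommGroup M] [Module R M]
    (hc : CSFinitePresMod R S M) :
    ∃ s ∈ S, ∃ (n : ℕ) (K : Submodule R (Fin n → R)), K.FG ∧
      ∃ f : ((Fin n → R) ⧸ K) →ₗ[R] M,
        (∀ x ∈ LinearMap.ker f, s • x = 0) ∧
        (∀ y : M ⧸ LinearMap.range f, s • y = 0) := by
  obtain ⟨N, hN, s, hsS, hsN⟩ := hc
  obtain ⟨n, K, e, hK⟩ := Module.FinitePresentation.exists_fin R N
  refine ⟨s, hsS, n, K, hK, N.subtype ∘ₗ e.symm.toLinearMap, ?_, ?_⟩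
  · intro x hx
    rw [show x = 0 by simpa using hx, smul_zero]
  · have hrange : range (N.subtype ∘ₗ e.symm.toLinearMap) = N := by
      rw [range_comp_of_range_eq_top _ e.symm.range, Submodule.range_subtype]
    rw [hrange]
    exact Submodule.smul_quotient_eq_zero hsN

/-- A finitely generated c-S-finitely presented module is u-S-finitely presented:
there are `s ∈ S`, a finitely presented module `F` (presented as `Rⁿ/K` with `K`
finitely generated) and `f : F →ₗ[R] M` with `s • ker f = 0` and `s • coker f = 0`. -/
theorem stmt18 {R : Type*} [CommRing R] (S : Submonoid R)
    {M : Type*} [AddCommGroup M] [Module R M]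
    (hfg : Module.Finite R M) (hc : CSFinitePresMod R S M) :
    ∃ s ∈ S, ∃ (n : ℕ) (K : Submodule R (Fin n → R)), K.FG ∧
      ∃ f : ((Fin n → R) ⧸ K) →ₗ[R] M,
        (∀ x ∈ LinearMap.ker f, s • x = 0) ∧
        (∀ y : M ⧸ LinearMap.range f, s • y = 0) :=
  stmt18_general S hc
end

section
/- Let R be a commutative ring, S a multiplicative set, M a finitely presented R-module, and L a finitely generated submodule of M. If every finitely generated submodule of every finitely generated free R-module is S-finitely presented, then L is S-finitely presented. -/
open Function LinearMap

/-! Present `M` as `F/K` with `F = Rⁿ` and `K` finitely generated, and pull `L` back to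
`L' ⊆ F`. Then `L'` is finitely generated, hence `S`-finitely presented by hypothesis, and
`L ≅ L'/K` is a quotient of it by a finitely generated submodule. Such quotients stay
`S`-finitely presented: lift generators of `K` to the free module presenting `L'` and add
them to the `S`-finite relations. -/

namespace Submodule

variable {R M N : Type*} [Ring R] [AddCommGroup M] [Module R M] [AddCommGroup N]
  [Module R N]

theorem exists_fg_map_eq_of_surjective {g : M →ₗ[R] N} (hg : Surjective g) {P : Submodule R N}
    (hP : P.FG) : ∃ P' : Submodule R M, P'.FG ∧ P'.map g = P := by
  obtain ⟨z, rfl⟩ := hP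
  refine ⟨span R (surjInv hg '' z), fg_span (z.finite_toSet.image _), ?_⟩
  rw [map_span, Set.image_image]
  simp only [surjInv_eq hg, Set.image_id']

theorem fg_comap_of_surjective {f : M →ₗ[R] N} (hf : Surjective f) (hker : (ker f).FG)
    {L : Submodule R N} (hL : L.FG) : (L.comap f).FG := by
  refine fg_of_fg_map_of_fg_inf_ker f ?_ ?_
  · rwa [map_comap_eq_of_surjective hf]
  · rwa [inf_eq_right.mpr (ker_le_comap f)]

theorem fg_comap_subtype_of_le {K N : Submodule R M} (hKN : K ≤ N) (hK : K.FG) :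
    (K.comap N.subtype).FG :=
  fg_of_fg_map_injective N.subtype N.injective_subtype <| by
    rwa [map_comap_subtype, inf_eq_right.mpr hKN]

end Submodule

open Submodule

theorem SFinitePres.of_surjective_of_fg_ker {R : Type*} [CommRing R] {S : Submonoid R}
    {N Q : Type*} [AddCommGroup N] [Module R N] [AddCommGroup Q] [Module R Q]
    (hN : SFinitePres R S N) {p : N →ₗ[R] Q} (hp : Surjective p) (hker : (ker p).FG) :
    SFinitePres R S Q := by
  obtain ⟨m, g, hg, K₀, hK₀, hK₀g, s, hs, hsK₀⟩ := hN
  obtain ⟨P, hP, hP_map⟩ := exists_fg_map_eq_of_surjective hg hker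
  have hker_comp : ker (p ∘ₗ g) = P ⊔ ker g := by
    rw [ker_comp, ← hP_map, comap_map_eq]
  refine ⟨m, p ∘ₗ g, hp.comp hg, P ⊔ K₀, hP.sup hK₀, ?_, s, hs, fun x hx => ?_⟩
  · rw [hker_comp]
    exact sup_le_sup_left hK₀g P
  · rw [hker_comp] at hx
    obtain ⟨a, ha, b, hb, rfl⟩ := mem_sup.mp hx
    rw [smul_add]
    exact add_mem_sup (P.smul_mem s ha) (hsK₀ b hb)

/-- If every finitely generated submodule of every finitely generated free module is
S-finitely presented, then every finitely generated submodule `L` of a finitely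
presented module `M` is S-finitely presented. -/
theorem stmt19 {R : Type*} [CommRing R] (S : Submonoid R)
    {M : Type*} [AddCommGroup M] [Module R M]
    (hM : Module.FinitePresentation R M) (L : Submodule R M) (hL : L.FG)
    (h : ∀ (n : ℕ) (N : Submodule R (Fin n → R)), N.FG → SFinitePres R S ↥N) :
    SFinitePres R S ↥L := by
  obtain ⟨n, f, hf⟩ := Module.Finite.exists_fin' R M
  have hker : (ker f).FG := hM.fg_ker f hf
  set L' := L.comap f
  let p : L' →ₗ[R] L := f.restrict fun _ hx => hx
  have hp : Surjective p := by
    rintro ⟨y, hy⟩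
    obtain ⟨x, rfl⟩ := hf y
    exact ⟨⟨x, hy⟩, rfl⟩
  have hker_p : (ker p).FG := by
    rw [ker_restrict]
    exact fg_comap_subtype_of_le (ker_le_comap f) hker
  exact (h n L' (fg_comap_of_surjective hf hker hL)).of_surjective_of_fg_ker hp hker_p
end
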